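/- Let Ω ⊂ ℂ be a bounded open set, h : Ω → ℂ a C¹ map with finite Dirichlet energy, and η a test function on Ω. For ε ∈ ℝ small enough that z + ε·η(z) ∈ Ω for all z ∈ Ω, define the inner variation h^ε(z) = h(z + ε·η(z)). Then the function ε ↦ E[h^ε] is differentiable at ε = 0, and its derivative there equals 4·Re ∫_Ω h_z(z)·conj(h_z̄(z))·η_z̄(z) dA(z). -/

import Mathlib

/-!
Write `φ_ε z = z + ε η z`. For small `ε` the map `φ_ε` is a Lipschitz-small perturbation of the
identity that fixes every point outside the support of `η`, hence a bijection of `Ω` onto itself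
with positive Jacobian `J_ε = |φ_z|² - |φ_z̄|²`. The change of variables `w = φ_ε z` turns
`E[h]` into `∫_Ω J_ε · e_h ∘ φ_ε`, where `e_h = |h_z|² + |h_z̄|²`, while the Wirtinger chain rule
gives `e_{h ∘ φ} = (|φ_z|² + |φ_z̄|²) · e_h ∘ φ + 4 Re (h_z conj h_z̄ ∘ φ · φ_z φ_z̄)`. With
`φ_z = 1 + ε η_z` and `φ_z̄ = ε η_z̄` the two differ by `ε` times an integrand that is continuous
in `ε` and bounded on the compact support of `η`, so `E[h^ε] = E[h] + ε A(ε)` with `A` continuous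
at `0` by dominated convergence, and the derivative is `A 0 = 4 Re ∫ h_z conj h_z̄ η_z̄`.
-/

open Complex MeasureTheory Set

/-- Wirtinger derivative `∂f/∂z` via the real Fréchet derivative. -/
noncomputable def wdz (f : ℂ → ℂ) (z : ℂ) : ℂ :=
  (1 / 2 : ℂ) * (fderiv ℝ f z 1 - Complex.I * fderiv ℝ f z Complex.I)

/-- Wirtinger derivative `∂f/∂z̄` via the real Fréchet derivative. -/
noncomputable def wdzbar (f : ℂ → ℂ) (z : ℂ) : ℂ :=
  (1 / 2 : ℂ) * (fderiv ℝ f z 1 + Complex.I * fderiv ℝ f z Complex.I)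

/-- Dirichlet energy of `f` on `Ω`. -/
noncomputable def energy (Ω : Set ℂ) (f : ℂ → ℂ) : ℝ :=
  ∫ z in Ω, ((‖wdz f z‖) ^ 2 + (‖wdzbar f z‖) ^ 2)

/-- A test function on `Ω`: smooth with compact support contained in `Ω`. -/
def IsTestFunction (Ω : Set ℂ) (η : ℂ → ℂ) : Prop :=
  ContDiff ℝ (⊤ : ℕ∞) η ∧ IsCompact (tsupport η) ∧ tsupport η ⊆ Ω

/-- An admissible change of variables of `Ω`: a `C¹` diffeomorphism of `Ω` onto itself
with everywhere positive Jacobian, equal to the identity outside a compact subset of `Ω`. -/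
structure IsAdmissibleChange (Ω : Set ℂ) (ξ : ℂ → ℂ) : Prop where
  contDiffOn : ContDiffOn ℝ 1 ξ Ω
  bijOn : Set.BijOn ξ Ω Ω
  jac_pos : ∀ z ∈ Ω, (‖wdz ξ z‖) ^ 2 - (‖wdzbar ξ z‖) ^ 2 > 0
  eq_id : ∃ K : Set ℂ, IsCompact K ∧ K ⊆ Ω ∧ ∀ z ∉ K, ξ z = z

/-- `h` is Hopf harmonic on `Ω`: `h` is `C¹` and its Hopf product is holomorphic on `Ω`. -/
def IsHopfHarmonic (Ω : Set ℂ) (h : ℂ → ℂ) : Prop :=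
  ContDiffOn ℝ 1 h Ω ∧
    DifferentiableOn ℂ (fun z => wdz h z * (starRingEnd ℂ) (wdzbar h z)) Ω

open Filter Function Topology ComplexConjugate
open scoped NNReal

theorem hasDerivAt_zero_of_eventually_eq_add_smul {𝕜 F : Type*} [NontriviallyNormedField 𝕜]
    [NormedAddCommGroup F] [NormedSpace 𝕜 F] {f A : 𝕜 → F}
    (hf : ∀ᶠ t in 𝓝 0, f t = f 0 + t • A t) (hA : ContinuousAt A 0) : HasDerivAt f (A 0) 0 := by
  rw [hasDerivAt_iff_tendsto_slope_zero]
  refine (hA.tendsto.mono_left nhdsWithin_le_nhds).congr' ?_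
  filter_upwards [nhdsWithin_le_nhds hf, self_mem_nhdsWithin] with t ht ht0
  rw [zero_add, ht, add_sub_cancel_left, smul_smul, inv_mul_cancel₀ ht0, one_smul]

theorem bijective_add_of_lipschitzWith {E : Type*} [NormedAddCommGroup E] [NormedSpace ℝ E]
    [CompleteSpace E] {g : E → E} {K : ℝ≥0} (hg : LipschitzWith K g) (hK : K < 1) :
    Bijective fun x => x + g x := by
  have happrox : ApproximatesLinearOn (fun x => x + g x)
      ((ContinuousLinearEquiv.refl ℝ E : E ≃L[ℝ] E) : E →L[ℝ] E) univ K :=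
    LipschitzOnWith.approximatesLinearOn
      (by simpa [Pi.sub_def] using hg.lipschitzOnWith (s := univ))
  have hc : Subsingleton E ∨ K < ‖((ContinuousLinearEquiv.refl ℝ E).symm : E →L[ℝ] E)‖₊⁻¹ := by
    rcases subsingleton_or_nontrivial E with hE | hE
    · exact Or.inl hE
    · exact Or.inr (by simpa using hK)
  exact ⟨injOn_univ.mp (happrox.injOn hc), happrox.surjective hc⟩

theorem Set.image_eq_self_of_surjective {α : Type*} {f : α → α} {s : Set α}
    (hf : Surjective f) (hs : MapsTo f s s) (hfix : ∀ x ∉ s, f x = x) : f '' s = s := by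
  refine hs.image_subset.antisymm fun y hy => ?_
  obtain ⟨x, rfl⟩ := hf y
  by_cases hx : x ∈ s
  · exact mem_image_of_mem f hx
  · exact absurd (hfix x hx ▸ hy) hx

section ChangeOfVariables

variable {E F : Type*} [NormedAddCommGroup E] [NormedSpace ℝ E] [FiniteDimensional ℝ E]
  [MeasurableSpace E] [BorelSpace E] {μ : Measure E} [μ.IsAddHaarMeasure]
  [NormedAddCommGroup F] [NormedSpace ℝ F] {s : Set E} {φ : E → E}

theorem integrableOn_det_smul_comp_iff (hs : MeasurableSet s)
    (hφ : ∀ x ∈ s, DifferentiableAt ℝ φ x) (hinj : InjOn φ s) (himg : φ '' s = s)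
    (hdet : ∀ x ∈ s, 0 ≤ (fderiv ℝ φ x).det) (g : E → F) :
    IntegrableOn (fun x => (fderiv ℝ φ x).det • g (φ x)) s μ ↔ IntegrableOn g s μ := by
  have hcov := integrableOn_image_iff_integrableOn_abs_det_fderiv_smul μ hs
    (fun x hx => (hφ x hx).hasFDerivAt.hasFDerivWithinAt) hinj g
  rw [himg] at hcov
  rw [hcov]
  exact integrableOn_congr_fun (fun x hx => by rw [abs_of_nonneg (hdet x hx)]) hs

theorem setIntegral_det_smul_comp (hs : MeasurableSet s)
    (hφ : ∀ x ∈ s, DifferentiableAt ℝ φ x) (hinj : InjOn φ s) (himg : φ '' s = s)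
    (hdet : ∀ x ∈ s, 0 ≤ (fderiv ℝ φ x).det) (g : E → F) :
    ∫ x in s, (fderiv ℝ φ x).det • g (φ x) ∂μ = ∫ x in s, g x ∂μ := by
  conv_rhs => rw [← himg, integral_image_eq_integral_abs_det_fderiv_smul μ hs
    (fun x hx => (hφ x hx).hasFDerivAt.hasFDerivWithinAt) hinj]
  exact setIntegral_congr_fun hs fun x hx => by rw [abs_of_nonneg (hdet x hx)]

end ChangeOfVariables

theorem ContinuousOn.integrableOn_of_eqOn_zero_off_compact {X E : Type*} [TopologicalSpace X]
    [T2Space X] [MeasurableSpace X] [OpensMeasurableSpace X] {μ : Measure X}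
    [IsFiniteMeasureOnCompacts μ] [NormedAddCommGroup E] {f : X → E} {s K : Set X}
    (hf : ContinuousOn f s) (hs : MeasurableSet s) (hK : IsCompact K) (hKs : K ⊆ s)
    (hf0 : ∀ x ∈ s \ K, f x = 0) : IntegrableOn f s μ :=
  ((hf.mono hKs).integrableOn_compact hK).of_forall_sdiff_eq_zero hs hf0

theorem fderiv_apply_eq_wdz_add_wdzbar (f : ℂ → ℂ) (z v : ℂ) :
    fderiv ℝ f z v = wdz f z * v + wdzbar f z * conj v := by
  have hv : v = v.re • (1 : ℂ) + v.im • I := by simp [Complex.real_smul]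
  conv_lhs => rw [hv, map_add, map_smul, map_smul]
  conv_rhs => rw [hv]
  simp only [wdz, wdzbar, Complex.real_smul, map_add, map_mul, conj_ofReal, conj_I, map_one]
  ring_nf
  rw [I_sq]
  ring

theorem wdz_eq_and_wdzbar_eq_of_fderiv_apply {f : ℂ → ℂ} {z A B : ℂ}
    (hf : ∀ v, fderiv ℝ f z v = A * v + B * conj v) : wdz f z = A ∧ wdzbar f z = B := by
  simp only [wdz, wdzbar, hf, map_one, conj_I]
  constructor <;> ring_nf <;> rw [I_sq] <;> ring

theorem wdz_comp_and_wdzbar_comp {h φ : ℂ → ℂ} {z : ℂ} (hh : DifferentiableAt ℝ h (φ z))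
    (hφ : DifferentiableAt ℝ φ z) :
    wdz (h ∘ φ) z = wdz h (φ z) * wdz φ z + wdzbar h (φ z) * conj (wdzbar φ z) ∧
      wdzbar (h ∘ φ) z = wdz h (φ z) * wdzbar φ z + wdzbar h (φ z) * conj (wdz φ z) := by
  refine wdz_eq_and_wdzbar_eq_of_fderiv_apply fun v => ?_
  rw [fderiv_comp z hh hφ, ContinuousLinearMap.comp_apply, fderiv_apply_eq_wdz_add_wdzbar h,
    fderiv_apply_eq_wdz_add_wdzbar φ]
  simp only [map_add, map_mul, conj_conj]
  ring

theorem det_fderiv_eq_norm_wdz_sq_sub_norm_wdzbar_sq (f : ℂ → ℂ) (z : ℂ) :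
    (fderiv ℝ f z).det = ‖wdz f z‖ ^ 2 - ‖wdzbar f z‖ ^ 2 := by
  rw [ContinuousLinearMap.det, ← LinearMap.det_toMatrix basisOneI, Matrix.det_fin_two]
  simp only [LinearMap.toMatrix_apply, ContinuousLinearMap.coe_coe, coe_basisOneI,
    Matrix.cons_val_zero, Matrix.cons_val_one, coe_basisOneI_repr,
    fderiv_apply_eq_wdz_add_wdzbar f z]
  simp only [map_one, mul_one, conj_I, Complex.sq_norm, normSq_apply, add_re, add_im, mul_re,
    mul_im, neg_re, neg_im, I_re, I_im]
  ring

theorem norm_wdz_le (f : ℂ → ℂ) (z : ℂ) : ‖wdz f z‖ ≤ ‖fderiv ℝ f z‖ := by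
  have h1 := (fderiv ℝ f z).le_opNorm 1
  have hI := (fderiv ℝ f z).le_opNorm I
  rw [norm_one, mul_one] at h1
  rw [norm_I, mul_one] at hI
  calc ‖wdz f z‖ ≤ 1 / 2 * (‖fderiv ℝ f z 1‖ + ‖I * fderiv ℝ f z I‖) := by
        rw [wdz, norm_mul]
        gcongr
        · norm_num
        · exact norm_sub_le _ _
    _ ≤ ‖fderiv ℝ f z‖ := by rw [norm_mul, norm_I, one_mul]; linarith

theorem norm_wdzbar_le (f : ℂ → ℂ) (z : ℂ) : ‖wdzbar f z‖ ≤ ‖fderiv ℝ f z‖ := by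
  have h1 := (fderiv ℝ f z).le_opNorm 1
  have hI := (fderiv ℝ f z).le_opNorm I
  rw [norm_one, mul_one] at h1
  rw [norm_I, mul_one] at hI
  calc ‖wdzbar f z‖ ≤ 1 / 2 * (‖fderiv ℝ f z 1‖ + ‖I * fderiv ℝ f z I‖) := by
        rw [wdzbar, norm_mul]
        gcongr
        · norm_num
        · exact norm_add_le _ _
    _ ≤ ‖fderiv ℝ f z‖ := by rw [norm_mul, norm_I, one_mul]; linarith

theorem wdzbar_eq_zero_of_notMem_tsupport {f : ℂ → ℂ} {z : ℂ} (hz : z ∉ tsupport f) :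
    wdzbar f z = 0 := by
  simp [wdzbar, fderiv_of_notMem_tsupport ℝ hz]

theorem ContinuousOn.wdz {f : ℂ → ℂ} {s : Set ℂ} (hf : ContinuousOn (fderiv ℝ f) s) :
    ContinuousOn (wdz f) s :=
  continuousOn_const.mul <| (hf.clm_apply continuousOn_const).sub
    (continuousOn_const.mul (hf.clm_apply continuousOn_const))

theorem ContinuousOn.wdzbar {f : ℂ → ℂ} {s : Set ℂ} (hf : ContinuousOn (fderiv ℝ f) s) :
    ContinuousOn (wdzbar f) s :=
  continuousOn_const.mul <| (hf.clm_apply continuousOn_const).add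
    (continuousOn_const.mul (hf.clm_apply continuousOn_const))

noncomputable def energyDensity (f : ℂ → ℂ) (z : ℂ) : ℝ :=
  ‖wdz f z‖ ^ 2 + ‖wdzbar f z‖ ^ 2

noncomputable def hopfProduct (f : ℂ → ℂ) (z : ℂ) : ℂ :=
  wdz f z * conj (wdzbar f z)

theorem ContDiffOn.continuousOn_energyDensity {f : ℂ → ℂ} {s : Set ℂ} (hf : ContDiffOn ℝ 1 f s)
    (hs : IsOpen s) : ContinuousOn (energyDensity f) s := by
  have hf' := hf.continuousOn_fderiv_of_isOpen hs le_rfl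
  exact (hf'.wdz.norm.pow 2).add (hf'.wdzbar.norm.pow 2)

theorem ContDiffOn.continuousOn_hopfProduct {f : ℂ → ℂ} {s : Set ℂ} (hf : ContDiffOn ℝ 1 f s)
    (hs : IsOpen s) : ContinuousOn (hopfProduct f) s := by
  have hf' := hf.continuousOn_fderiv_of_isOpen hs le_rfl
  exact hf'.wdz.mul (continuous_conj.comp_continuousOn hf'.wdzbar)

theorem energyDensity_comp {h φ : ℂ → ℂ} {z : ℂ} (hh : DifferentiableAt ℝ h (φ z))
    (hφ : DifferentiableAt ℝ φ z) :
    energyDensity (h ∘ φ) z = energyDensity φ z * energyDensity h (φ z)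
      + 4 * (hopfProduct h (φ z) * wdz φ z * wdzbar φ z).re := by
  obtain ⟨hz, hzbar⟩ := wdz_comp_and_wdzbar_comp hh hφ
  simp only [energyDensity, hopfProduct, hz, hzbar, Complex.sq_norm, normSq_apply, add_re, add_im,
    mul_re, mul_im, conj_re, conj_im]
  ring

def innerVariationMap (η : ℂ → ℂ) (ε : ℝ) (z : ℂ) : ℂ :=
  z + ε * η z

section InnerVariationMap

variable {η : ℂ → ℂ} {ε : ℝ}

theorem innerVariationMap_zero : innerVariationMap η 0 = id := by
  ext z
  simp [innerVariationMap]

theorem innerVariationMap_bijective {K : ℝ≥0} (hη : LipschitzWith K η)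
    (hεK : |ε| * K < 1) : Bijective (innerVariationMap η ε) := by
  refine bijective_add_of_lipschitzWith ((lipschitzWith_smul (ε : ℂ)).comp hη) ?_
  rw [← NNReal.coe_lt_coe, NNReal.coe_mul, coe_nnnorm, norm_real, Real.norm_eq_abs]
  exact hεK

theorem hasFDerivAt_innerVariationMap {z : ℂ} (hη : DifferentiableAt ℝ η z) :
    HasFDerivAt (innerVariationMap η ε)
      (ContinuousLinearMap.id ℝ ℂ + (ε : ℂ) • fderiv ℝ η z) z :=
  (hasFDerivAt_id z).add (hη.hasFDerivAt.const_mul (ε : ℂ))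

theorem wdz_and_wdzbar_innerVariationMap {z : ℂ} (hη : DifferentiableAt ℝ η z) :
    wdz (innerVariationMap η ε) z = 1 + ε * wdz η z ∧
      wdzbar (innerVariationMap η ε) z = ε * wdzbar η z := by
  refine wdz_eq_and_wdzbar_eq_of_fderiv_apply fun v => ?_
  rw [(hasFDerivAt_innerVariationMap hη).fderiv, add_apply,
    smul_apply, fderiv_apply_eq_wdz_add_wdzbar η, smul_eq_mul,
    ContinuousLinearMap.id_apply]
  ring

theorem det_fderiv_innerVariationMap_pos {K : ℝ≥0} (hη : Differentiable ℝ η)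
    (hK : ∀ z, ‖fderiv ℝ η z‖₊ ≤ K) (hεK : |ε| * K < 1 / 2) (z : ℂ) :
    0 < (fderiv ℝ (innerVariationMap η ε) z).det := by
  obtain ⟨hz, hzbar⟩ := wdz_and_wdzbar_innerVariationMap (ε := ε) (hη z)
  have hsmall : ∀ w : ℂ, ‖w‖ ≤ ‖fderiv ℝ η z‖ → ‖(ε : ℂ) * w‖ < 1 / 2 := fun w hw => by
    rw [norm_mul, norm_real, Real.norm_eq_abs]
    calc |ε| * ‖w‖ ≤ |ε| * K := by gcongr; exact hw.trans (hK z)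
      _ < 1 / 2 := hεK
  have hbar := hsmall _ (norm_wdzbar_le η z)
  have hlow : 1 / 2 < ‖1 + (ε : ℂ) * wdz η z‖ := by
    have := norm_sub_norm_le (1 : ℂ) (-((ε : ℂ) * wdz η z))
    rw [sub_neg_eq_add, norm_one, norm_neg] at this
    linarith [hsmall _ (norm_wdz_le η z)]
  rw [det_fderiv_eq_norm_wdz_sq_sub_norm_wdzbar_sq, hz, hzbar, sub_pos]
  exact pow_lt_pow_left₀ (hbar.trans hlow) (norm_nonneg _) two_ne_zero

end InnerVariationMap

/-- `(E[h ∘ φ_ε] - E[h]) / ε` is the integral of this density over `Ω`. -/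
noncomputable def slopeDensity (h η : ℂ → ℂ) (ε : ℝ) (z : ℂ) : ℝ :=
  2 * ε * ‖wdzbar η z‖ ^ 2 * energyDensity h (innerVariationMap η ε z)
    + 4 * (hopfProduct h (innerVariationMap η ε z) * (1 + ε * wdz η z) * wdzbar η z).re

section SlopeDensity

variable {Ω : Set ℂ} {h η : ℂ → ℂ} {ε : ℝ}

theorem energyDensity_comp_innerVariationMap {z : ℂ}
    (hh : DifferentiableAt ℝ h (innerVariationMap η ε z)) (hη : DifferentiableAt ℝ η z) :
    energyDensity (h ∘ innerVariationMap η ε) z =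
      (fderiv ℝ (innerVariationMap η ε) z).det * energyDensity h (innerVariationMap η ε z)
        + ε * slopeDensity h η ε z := by
  obtain ⟨hz, hzbar⟩ := wdz_and_wdzbar_innerVariationMap (ε := ε) hη
  rw [energyDensity_comp hh (hasFDerivAt_innerVariationMap hη).differentiableAt,
    det_fderiv_eq_norm_wdz_sq_sub_norm_wdzbar_sq, slopeDensity, energyDensity, hz, hzbar,
    norm_mul, norm_real, Real.norm_eq_abs, mul_pow, sq_abs,
    show ∀ T A B : ℂ, T * A * (ε * B) = ε * (T * A * B) from fun _ _ _ => by ring, re_ofReal_mul]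
  ring

theorem slopeDensity_eq_zero_of_notMem_tsupport {z : ℂ}
    (hz : z ∉ tsupport η) : slopeDensity h η ε z = 0 := by
  simp [slopeDensity, wdzbar_eq_zero_of_notMem_tsupport hz]

theorem continuousOn_slopeDensity (hΩ : IsOpen Ω) (hh : ContDiffOn ℝ 1 h Ω)
    (hη : ContDiff ℝ 1 η) {I : Set ℝ} (hmaps : ∀ ε ∈ I, MapsTo (innerVariationMap η ε) Ω Ω) :
    ContinuousOn (fun p : ℝ × ℂ => slopeDensity h η p.1 p.2) (I ×ˢ Ω) := by
  have hφ : Continuous fun p : ℝ × ℂ => innerVariationMap η p.1 p.2 := by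
    unfold innerVariationMap
    have := hη.continuous
    fun_prop
  have hmapsTo : MapsTo (fun p : ℝ × ℂ => innerVariationMap η p.1 p.2) (I ×ˢ Ω) Ω :=
    fun p hp => hmaps p.1 hp.1 hp.2
  have hG := (hh.continuousOn_energyDensity hΩ).comp hφ.continuousOn hmapsTo
  have hT := (hh.continuousOn_hopfProduct hΩ).comp hφ.continuousOn hmapsTo
  have hDη := (hη.continuous_fderiv one_ne_zero).continuousOn (s := univ)
  have ha : Continuous (wdz η) := continuousOn_univ.mp hDη.wdz
  have hb : Continuous (wdzbar η) := continuousOn_univ.mp hDη.wdzbar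
  have ha' : Continuous fun p : ℝ × ℂ => 1 + (p.1 : ℂ) * wdz η p.2 := by fun_prop
  have hb' : Continuous fun p : ℝ × ℂ => wdzbar η p.2 := hb.comp continuous_snd
  exact ((continuousOn_const.mul continuousOn_fst).mul (hb'.norm.pow 2).continuousOn |>.mul hG).add
    (continuousOn_const.mul (continuous_re.comp_continuousOn
      ((hT.mul ha'.continuousOn).mul hb'.continuousOn)))

theorem integrableOn_slopeDensity (hΩ : IsOpen Ω) (hh : ContDiffOn ℝ 1 h Ω)
    (hη : ContDiff ℝ 1 η) (hK : IsCompact (tsupport η)) (hKΩ : tsupport η ⊆ Ω)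
    (hmaps : MapsTo (innerVariationMap η ε) Ω Ω) : IntegrableOn (slopeDensity h η ε) Ω := by
  have hcont := continuousOn_slopeDensity hΩ hh hη (I := {ε}) fun _ hε => hε ▸ hmaps
  exact (hcont.comp (Continuous.prodMk_right ε).continuousOn fun z hz => ⟨rfl, hz⟩)
    |>.integrableOn_of_eqOn_zero_off_compact hΩ.measurableSet hK hKΩ
      fun z hz => slopeDensity_eq_zero_of_notMem_tsupport hz.2

theorem energy_comp_innerVariationMap (hΩ : IsOpen Ω) (hh : ContDiffOn ℝ 1 h Ω)
    (hfin : IntegrableOn (energyDensity h) Ω) (hη : ContDiff ℝ 1 η) (hK : IsCompact (tsupport η))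
    (hKΩ : tsupport η ⊆ Ω) {C : ℝ≥0} (hDη : ∀ z, ‖fderiv ℝ η z‖₊ ≤ C)
    (hεC : |ε| * C < 1 / 2) (hmaps : MapsTo (innerVariationMap η ε) Ω Ω) :
    energy Ω (h ∘ innerVariationMap η ε) = energy Ω h + ε * ∫ z in Ω, slopeDensity h η ε z := by
  have hηd : Differentiable ℝ η := hη.differentiable one_ne_zero
  have hbij : Bijective (innerVariationMap η ε) :=
    innerVariationMap_bijective (lipschitzWith_of_nnnorm_fderiv_le hηd hDη) (by linarith)
  have himg : innerVariationMap η ε '' Ω = Ω :=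
    image_eq_self_of_surjective hbij.2 hmaps fun z hz => by
      simp [innerVariationMap, image_eq_zero_of_notMem_tsupport fun hzK => hz (hKΩ hzK)]
  have hdiff : ∀ z ∈ Ω, DifferentiableAt ℝ (innerVariationMap η ε) z :=
    fun z _ => (hasFDerivAt_innerVariationMap (hηd z)).differentiableAt
  have hdet : ∀ z ∈ Ω, 0 ≤ (fderiv ℝ (innerVariationMap η ε) z).det :=
    fun z _ => (det_fderiv_innerVariationMap_pos hηd hDη hεC z).le
  have hpt : EqOn (energyDensity (h ∘ innerVariationMap η ε)) (fun z =>
      (fderiv ℝ (innerVariationMap η ε) z).det • energyDensity h (innerVariationMap η ε z)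
        + ε * slopeDensity h η ε z) Ω := fun z hz =>
    energyDensity_comp_innerVariationMap
      ((hh.differentiableOn one_ne_zero).differentiableAt (hΩ.mem_nhds (hmaps hz))) (hηd z)
  calc energy Ω (h ∘ innerVariationMap η ε)
      = ∫ z in Ω, (fderiv ℝ (innerVariationMap η ε) z).det •
          energyDensity h (innerVariationMap η ε z) + ε * slopeDensity h η ε z := setIntegral_congr_fun hΩ.measurableSet hpt
    _ = energy Ω h + ε * ∫ z in Ω, slopeDensity h η ε z := by
      rw [integral_add ((integrableOn_det_smul_comp_iff hΩ.measurableSet hdiff hbij.1.injOn himg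
          hdet _).2 hfin) ((integrableOn_slopeDensity hΩ hh hη hK hKΩ hmaps).const_mul ε),
        setIntegral_det_smul_comp hΩ.measurableSet hdiff hbij.1.injOn himg hdet,
        integral_const_mul]
      rfl

theorem continuousAt_integral_slopeDensity (hΩ : IsOpen Ω) (hh : ContDiffOn ℝ 1 h Ω)
    (hη : ContDiff ℝ 1 η) (hK : IsCompact (tsupport η)) (hKΩ : tsupport η ⊆ Ω) {ε₀ : ℝ}
    (hε₀ : 0 < ε₀) (hmaps : ∀ ε ∈ Metric.ball 0 ε₀, MapsTo (innerVariationMap η ε) Ω Ω) :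
    ContinuousAt (fun ε => ∫ z in Ω, slopeDensity h η ε z) 0 := by
  have hcont := continuousOn_slopeDensity hΩ hh hη hmaps
  obtain ⟨M, hM⟩ := ((isCompact_closedBall (0 : ℝ) (ε₀ / 2)).prod hK).exists_bound_of_continuousOn
    (hcont.mono (prod_mono (Metric.closedBall_subset_ball (half_lt_self hε₀)) hKΩ))
  refine continuousAt_of_dominated (bound := (tsupport η).indicator fun _ => M) ?_ ?_ ?_ ?_
  · filter_upwards [Metric.ball_mem_nhds 0 hε₀] with ε hε
    exact (hcont.comp (Continuous.prodMk_right ε).continuousOn fun z hz => ⟨hε, hz⟩)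
      |>.aestronglyMeasurable hΩ.measurableSet
  · filter_upwards [Metric.closedBall_mem_nhds 0 (half_pos hε₀)] with ε hε
    refine ae_restrict_of_forall_mem hΩ.measurableSet fun z _ => ?_
    by_cases hzK : z ∈ tsupport η
    · rw [indicator_of_mem hzK]
      exact hM (ε, z) ⟨hε, hzK⟩
    · rw [indicator_of_notMem hzK, slopeDensity_eq_zero_of_notMem_tsupport hzK, norm_zero]
  · exact ((integrableOn_const hK.measure_lt_top.ne).integrable_indicator hK.measurableSet).restrict
  · refine ae_restrict_of_forall_mem hΩ.measurableSet fun z hz => ?_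
    exact (hcont.continuousAt ((Metric.isOpen_ball.prod hΩ).mem_nhds
      ⟨Metric.mem_ball_self hε₀, hz⟩)).comp (Continuous.prodMk_left z).continuousAt

theorem integral_slopeDensity_zero (hΩ : IsOpen Ω) (hh : ContDiffOn ℝ 1 h Ω)
    (hη : ContDiff ℝ 1 η) (hK : IsCompact (tsupport η)) (hKΩ : tsupport η ⊆ Ω) :
    ∫ z in Ω, slopeDensity h η 0 z = 4 * (∫ z in Ω, hopfProduct h z * wdzbar η z).re := by
  have hb : Continuous (wdzbar η) :=
    continuousOn_univ.mp ((hη.continuous_fderiv one_ne_zero).continuousOn.wdzbar)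
  have hint : IntegrableOn (fun z => hopfProduct h z * wdzbar η z) Ω :=
    ((hh.continuousOn_hopfProduct hΩ).mul hb.continuousOn).integrableOn_of_eqOn_zero_off_compact
      hΩ.measurableSet hK hKΩ fun z hz => by
        rw [Pi.mul_apply, wdzbar_eq_zero_of_notMem_tsupport hz.2, mul_zero]
  simp only [slopeDensity, innerVariationMap, ofReal_zero, zero_mul, add_zero, mul_zero, zero_add,
    mul_one]
  rw [integral_const_mul]
  congr 1
  exact integral_re hint

end SlopeDensity

theorem stmt_4_general (Ω : Set ℂ) (hΩo : IsOpen Ω)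
    (h : ℂ → ℂ) (hh : ContDiffOn ℝ 1 h Ω)
    (hfin : IntegrableOn
      (fun z => (‖wdz h z‖) ^ 2 + (‖wdzbar h z‖) ^ 2) Ω volume)
    (η : ℂ → ℂ) (hη : IsTestFunction Ω η)
    (ε₀ : ℝ) (hε₀ : 0 < ε₀)
    (hin : ∀ ε : ℝ, |ε| < ε₀ → ∀ z ∈ Ω, z + (ε : ℂ) * η z ∈ Ω) :
    HasDerivAt (fun ε : ℝ => energy Ω (fun z => h (z + (ε : ℂ) * η z)))
      (4 * (∫ z in Ω, wdz h z * (starRingEnd ℂ) (wdzbar h z) * wdzbar η z).re) 0 := by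
  obtain ⟨hηsmooth, hK, hKΩ⟩ := hη
  have hη1 : ContDiff ℝ 1 η := hηsmooth.of_le (by exact_mod_cast le_top)
  have hmaps : ∀ ε ∈ Metric.ball (0 : ℝ) ε₀, MapsTo (innerVariationMap η ε) Ω Ω :=
    fun ε hε => hin ε (by simpa using hε)
  obtain ⟨C, hC⟩ := HasCompactSupport.fderiv (𝕜 := ℝ) hK |>.exists_bound_of_continuous
    (hη1.continuous_fderiv one_ne_zero)
  have hDη : ∀ z, ‖fderiv ℝ η z‖₊ ≤ C.toNNReal := fun z => by
    rw [← NNReal.coe_le_coe, coe_nnnorm]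
    exact (hC z).trans (Real.le_coe_toNNReal C)
  have hlim : Tendsto (fun ε : ℝ => |ε| * (C.toNNReal : ℝ)) (𝓝 0) (𝓝 0) := by
    have hcont : Continuous fun ε : ℝ => |ε| * (C.toNNReal : ℝ) := by fun_prop
    simpa using hcont.tendsto 0
  have hsmall : ∀ᶠ ε in 𝓝 (0 : ℝ), |ε| * (C.toNNReal : ℝ) < 1 / 2 ∧ ε ∈ Metric.ball 0 ε₀ :=
    (hlim.eventually_lt_const (by norm_num)).and (Metric.ball_mem_nhds 0 hε₀)
  have hslope : ∀ᶠ ε in 𝓝 (0 : ℝ), energy Ω (h ∘ innerVariationMap η ε) =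
      energy Ω (h ∘ innerVariationMap η 0) + ε • ∫ z in Ω, slopeDensity h η ε z := by
    filter_upwards [hsmall] with ε ⟨hεC, hε⟩
    rw [innerVariationMap_zero, comp_id, smul_eq_mul]
    exact energy_comp_innerVariationMap hΩo hh hfin hη1 hK hKΩ hDη hεC (hmaps ε hε)
  exact (hasDerivAt_zero_of_eventually_eq_add_smul hslope
    (continuousAt_integral_slopeDensity hΩo hh hη1 hK hKΩ hε₀ hmaps)).congr_deriv
    (integral_slopeDensity_zero hΩo hh hη1 hK hKΩ)

/-- The first inner variation of the Dirichlet energy: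
`d/dε E[h^ε] |_{ε=0} = 4 Re ∫ h_z conj(h_z̄) η_z̄`. -/
theorem stmt_4 (Ω : Set ℂ) (hΩo : IsOpen Ω) (hΩb : Bornology.IsBounded Ω)
    (h : ℂ → ℂ) (hh : ContDiffOn ℝ 1 h Ω)
    (hfin : IntegrableOn
      (fun z => (‖wdz h z‖) ^ 2 + (‖wdzbar h z‖) ^ 2) Ω volume)
    (η : ℂ → ℂ) (hη : IsTestFunction Ω η)
    (ε₀ : ℝ) (hε₀ : 0 < ε₀)
    (hin : ∀ ε : ℝ, |ε| < ε₀ → ∀ z ∈ Ω, z + (ε : ℂ) * η z ∈ Ω) :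
    HasDerivAt (fun ε : ℝ => energy Ω (fun z => h (z + (ε : ℂ) * η z)))
      (4 * (∫ z in Ω, wdz h z * (starRingEnd ℂ) (wdzbar h z) * wdzbar η z).re) 0 :=
  stmt_4_general Ω hΩo h hh hfin η hη ε₀ hε₀ hin
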